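/- The class of languages accepted in real time by simplified counter machines is a strict subset of the class accepted by general counter machines. -/
import Mathlib


/-- A counter update: add an integer, or reset to zero (the ×0 operation). -/
inductive CUpd where
  | add (m : ℤ)
  | reset
deriving DecidableEq

def CUpd.apply : CUpd → ℤ → ℤ
  | .add m, c => c + m
  | .reset, _ => 0

/-- A general real-time counter machine with states `Fin n` and `k` counters. -/
structure CM (σ : Type) (n k : ℕ) where
  q0 : Fin n
  u : σ → Fin n → (Fin k → Bool) → Fin k → CUpd
  δ : σ → Fin n → (Fin k → Bool) → Fin n
  F : Set (Fin n × (Fin k → Bool))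

/-- Elementwise zero-check: `false` if the counter is 0, `true` otherwise. -/
def zcheck {k : ℕ} (c : Fin k → ℤ) : Fin k → Bool :=
  fun i => decide (c i ≠ 0)

def CM.step {σ : Type} {n k : ℕ} (M : CM σ n k) (cfg : Fin n × (Fin k → ℤ)) (x : σ) :
    Fin n × (Fin k → ℤ) :=
  (M.δ x cfg.1 (zcheck cfg.2), fun i => (M.u x cfg.1 (zcheck cfg.2) i).apply (cfg.2 i))

/-- Real-time run: start at `⟨q₀, 0⟩` and take one transition per input token. -/
def CM.run {σ : Type} {n k : ℕ} (M : CM σ n k) (xs : List σ) : Fin n × (Fin k → ℤ) :=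
  xs.foldl M.step (M.q0, fun _ => 0)

def CM.accepts {σ : Type} {n k : ℕ} (M : CM σ n k) (xs : List σ) : Prop :=
  ((M.run xs).1, zcheck (M.run xs).2) ∈ M.F

def CM.acceptsLang {σ : Type} {n k : ℕ} (M : CM σ n k) (L : Set (List σ)) : Prop :=
  ∀ xs, M.accepts xs ↔ xs ∈ L

/-- An update is incremental if it is `×0` or adds a value in `{-1, 0, +1}`. -/
def CUpd.incremental : CUpd → Prop
  | .add m => m.natAbs ≤ 1
  | .reset => True

/-- A machine is simplified if its updates depend only on the input symbol and
are restricted to `{-1, +0, +1, ×0}`. -/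
def CM.simplified {σ : Type} {n k : ℕ} (M : CM σ n k) : Prop :=
  (∀ x q q' b b', M.u x q b = M.u x q' b') ∧ ∀ x q b i, (M.u x q b i).incremental

/-- The class of languages accepted in real time by general counter machines. -/
def CL (σ : Type) : Set (Set (List σ)) :=
  {L | ∃ n k, ∃ M : CM σ n k, M.acceptsLang L}

inductive AB where
  | a
  | b
deriving DecidableEq

/-- The language `{aᵐ b²ᵐ : m ∈ ℕ}`. -/
def Lab2 : Set (List AB) :=
  {xs | ∃ m : ℕ, xs = List.replicate m AB.a ++ List.replicate (2 * m) AB.b}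

/-- The class of languages accepted in real time by simplified counter machines. -/
def SCL (σ : Type) : Set (Set (List σ)) :=
  {L | ∃ n k, ∃ M : CM σ n k, M.simplified ∧ M.acceptsLang L}

namespace Stmt2Aux

abbrev repA (m : ℕ) : List AB := List.replicate m AB.a
abbrev repB (j : ℕ) : List AB := List.replicate j AB.b

lemma count_rep (m j : ℕ) :
    (repA m ++ repB j).count AB.a = m ∧ (repA m ++ repB j).count AB.b = j := by
  simp [List.count_append, List.count_replicate]

lemma rep_eq_rep {m j m' j' : ℕ} (h : repA m ++ repB j = repA m' ++ repB j') :
    m = m' ∧ j = j' := by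
  have h1 := congrArg (List.count AB.a) h
  have h2 := congrArg (List.count AB.b) h
  simp [List.count_append, List.count_replicate] at h1 h2
  exact ⟨h1, h2⟩

lemma key_le {m j m' j2 : ℕ} {ys : List AB} (hj : 1 ≤ j)
    (h : repA m ++ (repB j ++ ys) = repA m' ++ repB j2) : m' ≤ m := by
  by_contra hlt
  push_neg at hlt
  have hL : (repA m ++ (repB j ++ ys))[m]? = some AB.b := by
    rw [List.getElem?_append_right (by simp)]
    simp only [List.length_replicate, Nat.sub_self]
    rw [List.getElem?_append_left (by simp; omega)]
    simp [List.getElem?_replicate]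
    omega
  have hR : (repA m' ++ repB j2)[m]? = some AB.a := by
    rw [List.getElem?_append_left (by simp; omega)]
    simp [List.getElem?_replicate]
    omega
  rw [h, hR] at hL
  simp at hL

lemma D1 {m j : ℕ} (hj : 2 * m < j) (ys : List AB) :
    repA m ++ (repB j ++ ys) ∉ Lab2 := by
  rintro ⟨m', h⟩
  have hle : m' ≤ m := key_le (by omega) h
  have h1 := congrArg (List.count AB.a) h
  have h2 := congrArg (List.count AB.b) h
  simp [List.count_append, List.count_replicate] at h1 h2
  omega

lemma D2 {m j : ℕ} (hj : 1 ≤ j) (ys : List AB) :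
    repA m ++ (repB j ++ (AB.a :: ys)) ∉ Lab2 := by
  rintro ⟨m', h⟩
  have hle : m' ≤ m := key_le hj h
  have h1 := congrArg (List.count AB.a) h
  simp [List.count_append, List.count_replicate] at h1
  omega


lemma run_append_one {σ : Type} {n k : ℕ} (M : CM σ n k) (xs : List σ) (x : σ) :
    M.run (xs ++ [x]) = M.step (M.run xs) x := by
  simp [CM.run, List.foldl_append]

def M0 : CM AB 3 1 where
  q0 := 0
  u := fun x _ z _ => match x with
    | .a => .add 2
    | .b => if z 0 then .add (-1) else .add 0
  δ := fun x q z => match x with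
    | .a => if q = 0 then 0 else 2
    | .b => if q = 2 then 2 else if z 0 then 1 else 2
  F := {p | p = (0, fun _ => false) ∨ p = (1, fun _ => false)}

def Inv (xs : List AB) : Prop :=
  (∃ m, xs = repA m ∧ M0.run xs = (0, fun _ => (2 * m : ℤ)))
  ∨ (∃ m j, 1 ≤ j ∧ j ≤ 2 * m ∧ xs = repA m ++ repB j ∧
      M0.run xs = (1, fun _ => (2 * m - j : ℤ)))
  ∨ ((M0.run xs).1 = 2 ∧ ∀ ys, xs ++ ys ∉ Lab2)

lemma zc_const (v : ℤ) : zcheck (fun _ : Fin 1 => v) = fun _ => decide (v ≠ 0) := rfl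

lemma inv_all (xs : List AB) : Inv xs := by
  induction xs using List.reverseRecOn with
  | nil =>
    left
    refine ⟨0, rfl, ?_⟩
    simp [CM.run, M0]
  | append_singleton xs x ih =>
    rw [Inv, run_append_one]
    rcases ih with ⟨m, hxs, hrun⟩ | ⟨m, j, hj1, hj2, hxs, hrun⟩ | ⟨hq, hdead⟩
    · -- state 0, xs = repA m, counter 2m
      rw [hrun]
      cases x with
      | a =>
        left
        refine ⟨m + 1, ?_, ?_⟩
        · rw [hxs, ← List.replicate_succ']
        · simp only [CM.step, M0, zc_const]
          refine Prod.ext rfl (funext fun i => ?_)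
          simp [CUpd.apply]
          push_cast
          ring
      | b =>
        rcases Nat.eq_zero_or_pos m with hm | hm
        · right; right
          subst hm
          constructor
          · simp [CM.step, M0, zc_const]
          · intro ys
            have := D1 (m := 0) (j := 1) (by omega) ys
            simpa [hxs] using this
        · right; left
          refine ⟨m, 1, le_refl _, by omega, ?_, ?_⟩
          · rw [hxs]; rfl
          · have hz : ((2 * m : ℤ) ≠ 0) := by positivity
            simp only [CM.step, M0, zc_const]
            simp only [ne_eq, decide_not]
            refine Prod.ext ?_ (funext fun i => ?_)
            · simp [hz]
            · simp [hz, CUpd.apply]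
              ring
    · -- state 1, xs = repA m ++ repB j
      rw [hrun]
      cases x with
      | a =>
        right; right
        constructor
        · simp [CM.step, M0]
        · intro ys
          have := D2 (m := m) (j := j) hj1 ys
          rw [hxs]
          simpa [List.append_assoc] using this
      | b =>
        rcases Nat.lt_or_ge j (2 * m) with hlt | hge
        · right; left
          refine ⟨m, j + 1, by omega, by omega, ?_, ?_⟩
          · rw [hxs, List.append_assoc, ← List.replicate_succ']
          · have hz : ((2 * m - j : ℤ) ≠ 0) := by
              have : (j : ℤ) < 2 * m := by exact_mod_cast hlt
              omega
            simp only [CM.step, M0, zc_const]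
            simp only [ne_eq, decide_not]
            refine Prod.ext ?_ (funext fun i => ?_)
            · simp [hz]
            · simp [hz, CUpd.apply]
              push_cast
              ring
        · -- j = 2*m : counter is zero, dead
          have hje : j = 2 * m := le_antisymm hj2 hge
          right; right
          have hz : ((2 * m - j : ℤ) = 0) := by
            subst hje; push_cast; ring
          constructor
          · simp [CM.step, M0, zc_const, hz]
          · intro ys
            have := D1 (m := m) (j := j + 1) (by omega) ys
            rw [hxs]
            simpa [List.append_assoc, ← List.replicate_succ'] using this
    · -- dead state
      right; right
      constructor
      · have : M0.δ x (M0.run xs).1 (zcheck (M0.run xs).2) = 2 := by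
          rw [hq]
          cases x <;> simp [M0]
        simpa [CM.step] using this
      · intro ys
        rw [List.append_assoc]
        exact hdead _

lemma M0_lang : M0.acceptsLang Lab2 := by
  intro xs
  rcases inv_all xs with ⟨m, hxs, hrun⟩ | ⟨m, j, hj1, hj2, hxs, hrun⟩ | ⟨hq, hdead⟩
  · rw [CM.accepts, hrun]
    constructor
    · rintro (hF | hF)
      · have h2 := congrFun (congrArg Prod.snd hF) 0
        simp [zc_const] at h2
        have hm : m = 0 := by exact_mod_cast h2
        subst hm
        exact ⟨0, by simpa using hxs⟩
      · have h1 := congrArg Prod.fst hF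
        simp at h1
    · rintro ⟨m', hmem⟩
      rw [hxs] at hmem
      have : repA m ++ repB 0 = repA m' ++ repB (2 * m') := by simpa using hmem
      obtain ⟨he1, he2⟩ := rep_eq_rep this
      have hm : m = 0 := by omega
      subst hm
      left
      refine Prod.ext rfl (funext fun i => ?_)
      simp [zcheck]
  · rw [CM.accepts, hrun]
    constructor
    · rintro (hF | hF)
      · have h1 := congrArg Prod.fst hF
        simp at h1
      · have h2 := congrFun (congrArg Prod.snd hF) 0
        simp [zc_const] at h2
        have hje : j = 2 * m := by
          have : (j : ℤ) = 2 * m := by omega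
          exact_mod_cast this
        exact ⟨m, by rw [hxs, hje]⟩
    · rintro ⟨m', hmem⟩
      rw [hxs] at hmem
      obtain ⟨he1, he2⟩ := rep_eq_rep hmem
      right
      refine Prod.ext rfl (funext fun i => ?_)
      have : (2 * m - j : ℤ) = 0 := by
        subst he1 he2; push_cast; ring
      simp [zc_const, this]
  · rw [CM.accepts]
    constructor
    · rintro (hF | hF) <;>
      · have h1 := congrArg Prod.fst hF
        rw [hq] at h1
        simp at h1
    · intro hmem
      exact absurd (by simpa using hmem) (hdead [])

/-! ### Part 2: `Lab2 ∉ SCL` -/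

/-- Counter evolution under a state-independent update function. -/
def cnt {k : ℕ} (u0 : AB → Fin k → CUpd) (xs : List AB) : Fin k → ℤ :=
  xs.foldl (fun c x => fun i => (u0 x i).apply (c i)) (fun _ => 0)

lemma cnt_append_one {k : ℕ} (u0 : AB → Fin k → CUpd) (xs : List AB) (x : AB) :
    cnt u0 (xs ++ [x]) = fun i => (u0 x i).apply (cnt u0 xs i) := by
  simp [cnt, List.foldl_append]

lemma cnt_append_one' {k : ℕ} (u0 : AB → Fin k → CUpd) (xs : List AB) (x : AB) (i : Fin k) :
    cnt u0 (xs ++ [x]) i = (u0 x i).apply (cnt u0 xs i) := by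
  rw [cnt_append_one]

lemma run_snd_eq_cnt {n k : ℕ} (M : CM AB n k) (hs : M.simplified) (xs : List AB) :
    (M.run xs).2 = cnt (fun x => M.u x M.q0 (fun _ => false)) xs := by
  induction xs using List.reverseRecOn with
  | nil => rfl
  | append_singleton xs x ih =>
    rw [run_append_one, cnt_append_one]
    funext i
    simp only [CM.step]
    rw [hs.1 x (M.run xs).1 M.q0 (zcheck (M.run xs).2) (fun _ => false), ih]

lemma cnt_bound {k : ℕ} (u0 : AB → Fin k → CUpd)
    (hinc : ∀ x i, (u0 x i).incremental) (xs : List AB) (i : Fin k) :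
    (cnt u0 xs i).natAbs ≤ xs.length := by
  induction xs using List.reverseRecOn with
  | nil => simp [cnt]
  | append_singleton xs x ih =>
    have h := hinc x i
    cases hx : u0 x i with
    | reset => rw [cnt_append_one', hx]; simp [CUpd.apply]
    | add mm =>
      rw [hx] at h
      simp only [CUpd.incremental] at h
      rw [cnt_append_one', hx]
      simp only [CUpd.apply, List.length_append, List.length_cons, List.length_nil]
      omega

lemma cnt_rep_reset {k : ℕ} (u0 : AB → Fin k → CUpd) (xs : List AB) (x : AB) {j : ℕ}
    (hj : 1 ≤ j) {i : Fin k} (h : u0 x i = .reset) :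
    cnt u0 (xs ++ List.replicate j x) i = 0 := by
  induction j with
  | zero => omega
  | succ j ih =>
    rcases Nat.eq_zero_or_pos j with hj0 | hj0
    · subst hj0
      rw [show List.replicate 1 x = [x] from rfl, cnt_append_one', h]
      rfl
    · rw [List.replicate_succ', ← List.append_assoc, cnt_append_one', h]
      rfl

lemma cnt_rep_add {k : ℕ} (u0 : AB → Fin k → CUpd) (xs : List AB) (x : AB) (j : ℕ)
    {i : Fin k} {β : ℤ} (h : u0 x i = .add β) :
    cnt u0 (xs ++ List.replicate j x) i = cnt u0 xs i + β * j := by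
  induction j with
  | zero => simp
  | succ j ih =>
    rw [List.replicate_succ', ← List.append_assoc, cnt_append_one', h]
    simp only [CUpd.apply, ih]
    push_cast
    ring

/-- zcheck stability: for `j ≥ m+1` the zero-pattern of `a^m b^j` is that of `a^m b^(m+1)`. -/
lemma zc_stable {k : ℕ} (u0 : AB → Fin k → CUpd)
    (hinc : ∀ x i, (u0 x i).incremental) (m : ℕ) (hm : 1 ≤ m) {j : ℕ} (hj : m + 1 ≤ j) :
    zcheck (cnt u0 (repA m ++ repB j)) = zcheck (cnt u0 (repA m ++ repB (m + 1))) := by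
  funext i
  cases hb : u0 AB.b i with
  | reset =>
    rw [zcheck, zcheck, cnt_rep_reset u0 _ _ (by omega) hb, cnt_rep_reset u0 _ _ (by omega) hb]
  | add β =>
    have hβ : β.natAbs ≤ 1 := by have := hinc AB.b i; rw [hb] at this; exact this
    have hA : (cnt u0 (repA m) i).natAbs ≤ m := by
      have := cnt_bound u0 hinc (repA m) i
      simpa using this
    rw [zcheck, zcheck, cnt_rep_add u0 _ _ _ hb, cnt_rep_add u0 _ _ _ hb]
    set A := cnt u0 (repA m) i with hAdef
    have hβ3 : β = -1 ∨ β = 0 ∨ β = 1 := by omega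
    rcases hβ3 with h3 | h3 | h3 <;> subst h3 <;>
      simp only [decide_eq_decide] <;> constructor <;> intro hne <;> omega

theorem Lab2_not_SCL : Lab2 ∉ SCL AB := by
  rintro ⟨n, k, M, hs, hL⟩
  set u0 : AB → Fin k → CUpd := fun x => M.u x M.q0 (fun _ => false) with hu0
  have hinc : ∀ x i, (u0 x i).incremental := fun x i => hs.2 x M.q0 (fun _ => false) i
  set m : ℕ := n + 1 with hmdef
  have hm : 1 ≤ m := by omega
  -- the word family
  set w : ℕ → List AB := fun j => repA m ++ repB j with hw
  set g : ℕ → Fin n := fun j => (M.run (w j)).1 with hg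
  set P : Fin k → Bool := zcheck (cnt u0 (w (m + 1))) with hP
  set f : Fin n → Fin n := fun q => M.δ AB.b q P with hf
  -- step relation for the state sequence
  have hstep : ∀ j, m + 1 ≤ j → g (j + 1) = f (g j) := by
    intro j hj
    have hws : w (j + 1) = w j ++ [AB.b] := by
      simp only [hw, List.replicate_succ', List.append_assoc]
    have : M.run (w (j + 1)) = M.step (M.run (w j)) AB.b := by
      rw [hws, run_append_one]
    simp only [hg, this, CM.step]
    congr 1
    rw [run_snd_eq_cnt M hs, ← hu0, zc_stable u0 hinc m hm hj, ← hP]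
  have hiter : ∀ r, g (m + 1 + r) = f^[r] (g (m + 1)) := by
    intro r
    induction r with
    | zero => rfl
    | succ r ih =>
      rw [show m + 1 + (r + 1) = (m + 1 + r) + 1 by ring,
        hstep _ (by omega), ih, Function.iterate_succ_apply']
  -- pigeonhole on iterates
  have hcard : Fintype.card (Fin n) < Fintype.card (Fin (n + 1)) := by simp
  obtain ⟨r1, r2, hne, heq⟩ :=
    Fintype.exists_ne_map_eq_of_card_lt (fun r : Fin (n + 1) => f^[(r : ℕ)] (g (m + 1))) hcard
  -- wlog r1 < r2
  wlog hlt : (r1 : ℕ) < (r2 : ℕ) generalizing r1 r2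
  · exact this r2 r1 hne.symm heq.symm (by omega)
  set s : ℕ := (r1 : ℕ) with hsdef
  set t : ℕ := (r2 : ℕ) with htdef
  set d : ℕ := t - s with hddef
  have hd1 : 1 ≤ d := by omega
  have hperiod : ∀ r, s ≤ r → f^[r] (g (m + 1)) = f^[r + d] (g (m + 1)) := by
    intro r hr
    have h1 : r = (r - s) + s := by omega
    have h2 : r + d = (r - s) + t := by omega
    rw [h1, Function.iterate_add_apply, heq, ← Function.iterate_add_apply, ← h2,
      show (r - s) + s + d = r + d by omega, h2, Function.iterate_add_apply]
  have hsn : s ≤ m - 1 := by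
    have : s < n + 1 := r1.isLt
    omega
  have hg2m : g (2 * m + d) = g (2 * m) := by
    have h1 : g (2 * m) = f^[m - 1] (g (m + 1)) := by
      rw [← hiter]; congr 1; omega
    have h2 : g (2 * m + d) = f^[m - 1 + d] (g (m + 1)) := by
      rw [← hiter]; congr 1; omega
    rw [h1, h2, hperiod _ hsn]
  -- zero-patterns agree
  have hzc : ∀ j, m + 1 ≤ j → zcheck ((M.run (w j)).2) = P := by
    intro j hj
    rw [run_snd_eq_cnt M hs, ← hu0, zc_stable u0 hinc m hm hj, hP]
  -- acceptance transfer
  have hacc : M.accepts (w (2 * m)) := by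
    rw [hL]
    exact ⟨m, rfl⟩
  have hacc2 : M.accepts (w (2 * m + d)) := by
    rw [CM.accepts] at hacc ⊢
    rw [hzc _ (by omega)] at hacc ⊢
    rw [show ((M.run (w (2 * m + d))).1 : Fin n) = g (2 * m + d) from rfl, hg2m]
    exact hacc
  rw [hL] at hacc2
  obtain ⟨m', hmem⟩ := hacc2
  obtain ⟨he1, he2⟩ := rep_eq_rep (hw ▸ hmem)
  omega

end Stmt2Aux

/-- The simplified counter languages are a strict subset of the general counter languages. -/
theorem stmt2 : SCL AB ⊂ CL AB := by
  constructor
  · rintro L ⟨n, k, M, _, hM⟩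
    exact ⟨n, k, M, hM⟩
  · intro hsub
    have hC : Lab2 ∈ CL AB := ⟨3, 1, Stmt2Aux.M0, Stmt2Aux.M0_lang⟩
    exact Stmt2Aux.Lab2_not_SCL (hsub hC)
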